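/- (Higher Melnikov function with vanishing constant and logarithmic terms.) Let b, c be real numbers with (b, c) ≠ (0, 0) such that (16/15)·b + (16/3)·c = 0 (vanishing of the constant term), and set M(h) = b·I_2(h) + c·I'_4(h). Then the coefficient 4b + 4c is nonzero and M(h)/h → 4b + 4c as h → 0⁺. -/

import Mathlib

/-!
The constant-term condition forces `b = -5c`, so `M = c (I'₄ - 5 I₂)`. Integrating the derivative
of `x³ √(2h + x² - x⁴/2)` over `[-x_max, x_max]` gives `I'₄ - 5 I₂ + 4h I'₂ = 0`, hence
`M(h)/h = -4c I'₂(h)`. As the oval degenerates to the figure eight, `I'₂(h) → ∫ 2|sin θ| dθ = 4`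
over `(-π/2, π/2)`, and `-16c = 4b + 4c`. Both the fundamental theorem of calculus and dominated
convergence are applied after the substitution `x = x_max sin θ`, which makes every integrand
continuous.
-/

open Real Set Filter intervalIntegral

/-- Right endpoint of the exterior oval: `x_max(h) = √(1 + √(1+4h))`. -/
noncomputable def xmax (h : ℝ) : ℝ := Real.sqrt (1 + Real.sqrt (1 + 4*h))

/-- Complete elliptic integral `I_i(h) = ∫_{-x_max}^{x_max} x^i √(2h + x² - x⁴/2) dx`. -/
noncomputable def ellI (i : ℕ) (h : ℝ) : ℝ :=
  ∫ x in (-xmax h)..(xmax h), x^i * Real.sqrt (2*h + x^2 - x^4/2)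

/-- Complete elliptic integral `I'_i(h) = ∫_{-x_max}^{x_max} x^i (2h + x² - x⁴/2)^{-1/2} dx`. -/
noncomputable def ellI' (i : ℕ) (h : ℝ) : ℝ :=
  ∫ x in (-xmax h)..(xmax h), x^i / Real.sqrt (2*h + x^2 - x^4/2)

open MeasureTheory Topology

lemma one_lt_sqrt_one_add_four_mul {h : ℝ} (hh : 0 < h) : 1 < √(1 + 4 * h) := by
  rw [Real.lt_sqrt zero_le_one]; linarith

lemma xmax_sq (h : ℝ) : xmax h ^ 2 = 1 + √(1 + 4 * h) :=
  Real.sq_sqrt (by positivity)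

lemma xmax_nonneg (h : ℝ) : 0 ≤ xmax h := Real.sqrt_nonneg _

@[fun_prop]
lemma continuous_xmax : Continuous xmax := by
  unfold xmax; fun_prop

lemma intervalIntegral_symm_eq_integral_mul_sin {E : Type*} [NormedAddCommGroup E]
    [NormedSpace ℝ E] {r : ℝ} (hr : 0 ≤ r) (g : ℝ → E) :
    ∫ x in -r..r, g x = ∫ θ in -(π / 2)..(π / 2), (r * cos θ) • g (r * sin θ) := by
  have hπ : -(π / 2) ≤ π / 2 := by linarith [pi_pos]
  have key := integral_Icc_deriv_smul_of_deriv_nonneg (g := g) (f := fun θ => r * sin θ)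
    (f' := fun θ => r * cos θ) (by fun_prop)
    (fun θ _ => (hasDerivAt_sin θ).const_mul r)
    (fun θ hθ => mul_nonneg hr (cos_nonneg_of_mem_Icc (Ioo_subset_Icc_self hθ))) hπ
  simp only [sin_neg, sin_pi_div_two, mul_neg, mul_one] at key
  rw [integral_of_le (by linarith), integral_of_le hπ, ← integral_Icc_eq_integral_Ioc,
    ← integral_Icc_eq_integral_Ioc, key]

/-- Under `x = xmax h * sin θ` the radicand `2h + x² - x⁴/2` factors as
`(xmax h * cos θ)² * thetaRadicand h θ`, and for `h > 0` the second factor is bounded away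
from `0`: this removes the square-root singularities at the endpoints. -/
noncomputable def thetaRadicand (h θ : ℝ) : ℝ :=
  ((1 + √(1 + 4 * h)) * sin θ ^ 2 + (√(1 + 4 * h) - 1)) / 2

lemma radicand_eq_of_sq_eq {s u v h r : ℝ} (hr : r ^ 2 = 1 + s) (hs : s ^ 2 = 1 + 4 * h)
    (huv : u ^ 2 + v ^ 2 = 1) :
    2 * h + (r * u) ^ 2 - (r * u) ^ 4 / 2 = (r * v) ^ 2 * (((1 + s) * u ^ 2 + (s - 1)) / 2) := by
  linear_combination (-(r^2*u^2/2)*(1+s) + (r^2/2)*(1-s)) * huv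
    + (-(r^2*u^4/2) + (1-s)/2) * hr + (-1/2 : ℝ) * hs

lemma thetaRadicand_pos {h : ℝ} (hh : 0 < h) (θ : ℝ) : 0 < thetaRadicand h θ := by
  have := one_lt_sqrt_one_add_four_mul hh
  unfold thetaRadicand; positivity

@[fun_prop]
lemma continuous_thetaRadicand (h : ℝ) : Continuous (thetaRadicand h) := by
  unfold thetaRadicand; fun_prop

lemma sqrt_radicand_xmax_mul_sin {h θ : ℝ} (hh : 0 ≤ 1 + 4 * h) (hθ : 0 ≤ cos θ) :
    √(2 * h + (xmax h * sin θ) ^ 2 - (xmax h * sin θ) ^ 4 / 2)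
      = xmax h * cos θ * √(thetaRadicand h θ) := by
  rw [radicand_eq_of_sq_eq (xmax_sq h) (Real.sq_sqrt hh) (sin_sq_add_cos_sq θ),
    Real.sqrt_mul (sq_nonneg _), Real.sqrt_sq (mul_nonneg (xmax_nonneg h) hθ), thetaRadicand]

lemma ellI_eq_integral_theta (i : ℕ) {h : ℝ} (hh : 0 ≤ 1 + 4 * h) :
    ellI i h = ∫ θ in -(π / 2)..(π / 2),
      (xmax h * sin θ) ^ i * ((xmax h * cos θ) ^ 2 * √(thetaRadicand h θ)) := by
  rw [ellI, intervalIntegral_symm_eq_integral_mul_sin (xmax_nonneg h)]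
  refine integral_congr fun θ hθ => ?_
  rw [uIcc_of_le (by linarith [pi_pos])] at hθ
  simp only [smul_eq_mul, sqrt_radicand_xmax_mul_sin hh (cos_nonneg_of_mem_Icc hθ)]
  ring

lemma ellI'_eq_integral_theta (i : ℕ) {h : ℝ} (hh : 0 < h) :
    ellI' i h = ∫ θ in -(π / 2)..(π / 2), (xmax h * sin θ) ^ i / √(thetaRadicand h θ) := by
  rw [ellI', intervalIntegral_symm_eq_integral_mul_sin (xmax_nonneg h)]
  refine integral_congr_Ioo_of_le (by linarith [pi_pos]) fun θ hθ => ?_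
  have hcos := cos_pos_of_mem_Ioo hθ
  have hr : 0 < xmax h := Real.sqrt_pos.2 (by positivity)
  have hP := Real.sqrt_pos.2 (thetaRadicand_pos hh θ)
  rw [smul_eq_mul, sqrt_radicand_xmax_mul_sin (by linarith : 0 ≤ 1 + 4 * h) hcos.le]
  field_simp

lemma antiderivative_deriv_identity {s u v q h r : ℝ} (hr : r ^ 2 = 1 + s)
    (hs : s ^ 2 = 1 + 4 * h) (huv : u ^ 2 + v ^ 2 = 1) (hq : q ^ 2 = ((1 + s) * u ^ 2 + (s - 1)) / 2)
    (hq0 : q ≠ 0) :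
    -r ^ 4 * ((3 * u ^ 2 * v * v + u ^ 3 * -u) * q + u ^ 3 * v * ((1 + s) * u * v / (2 * q)))
      = (r * u) ^ 4 / q - 5 * ((r * u) ^ 2 * ((r * v) ^ 2 * q)) + 4 * h * ((r * u) ^ 2 / q) := by
  field_simp
  linear_combination (4*r^4*u^2*v^2 + 2*r^4*u^4) * hq
    + (r^4*u^4*(1+s) + 2*r^4*u^2*(s-1)) * huv + (2*r^2*u^2*(s-1)) * hr + (2*r^2*u^2) * hs

/-- The antiderivative is `-x³ √(2h + x² - x⁴/2)` in the coordinate `x = xmax h * sin t`. -/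
lemma hasDerivAt_theta_antiderivative {h : ℝ} (hh : 0 < h) (θ : ℝ) :
    HasDerivAt (fun t => -xmax h ^ 4 * (sin t ^ 3 * cos t * √(thetaRadicand h t)))
      ((xmax h * sin θ) ^ 4 / √(thetaRadicand h θ)
        - 5 * ((xmax h * sin θ) ^ 2 * ((xmax h * cos θ) ^ 2 * √(thetaRadicand h θ)))
        + 4 * h * ((xmax h * sin θ) ^ 2 / √(thetaRadicand h θ))) θ := by
  set s := √(1 + 4 * h)
  have hP : HasDerivAt (thetaRadicand h) ((1 + s) * sin θ * cos θ) θ :=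
    ((((hasDerivAt_sin θ).pow 2).const_mul (1 + s)).add_const (s - 1)).div_const 2
      |>.congr_deriv (by ring)
  have hsc : HasDerivAt (fun t => sin t ^ 3 * cos t)
      (3 * sin θ ^ 2 * cos θ * cos θ + sin θ ^ 3 * -sin θ) θ :=
    ((hasDerivAt_sin θ).pow 3).mul (hasDerivAt_cos θ) |>.congr_deriv (by norm_num)
  refine ((hsc.mul (hP.sqrt (thetaRadicand_pos hh θ).ne')).const_mul (-xmax h ^ 4)).congr_deriv ?_
  exact antiderivative_deriv_identity (xmax_sq h) (Real.sq_sqrt (by linarith))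
    (sin_sq_add_cos_sq θ) (Real.sq_sqrt (thetaRadicand_pos hh θ).le)
    (Real.sqrt_pos.2 (thetaRadicand_pos hh θ)).ne'

lemma ellI'_four_sub_five_mul_ellI_two {h : ℝ} (hh : 0 < h) :
    ellI' 4 h - 5 * ellI 2 h + 4 * h * ellI' 2 h = 0 := by
  have hP0 θ : √(thetaRadicand h θ) ≠ 0 := (Real.sqrt_pos.2 (thetaRadicand_pos hh θ)).ne'
  have hI' (n : ℕ) : IntervalIntegrable (fun θ => (xmax h * sin θ) ^ n / √(thetaRadicand h θ))
      volume (-(π / 2)) (π / 2) :=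
    (Continuous.div (by fun_prop) (by fun_prop) hP0).intervalIntegrable _ _
  have hI : IntervalIntegrable
      (fun θ => (xmax h * sin θ) ^ 2 * ((xmax h * cos θ) ^ 2 * √(thetaRadicand h θ)))
      volume (-(π / 2)) (π / 2) :=
    (by fun_prop : Continuous _).intervalIntegrable _ _
  have ftc := integral_eq_sub_of_hasDerivAt (fun θ _ => hasDerivAt_theta_antiderivative hh θ)
    (((hI' 4).sub (hI.const_mul 5)).add ((hI' 2).const_mul (4 * h)))
  rw [integral_add ((hI' 4).sub (hI.const_mul 5)) ((hI' 2).const_mul (4 * h)),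
    integral_sub (hI' 4) (hI.const_mul 5), intervalIntegral.integral_const_mul,
    intervalIntegral.integral_const_mul] at ftc
  rw [ellI'_eq_integral_theta 4 hh, ellI_eq_integral_theta 2 (by linarith),
    ellI'_eq_integral_theta 2 hh, ftc]
  simp

lemma integral_abs_sin_neg_pi_div_two_pi_div_two : ∫ θ in -(π / 2)..(π / 2), |sin θ| = 2 := by
  have hc : Continuous fun θ => |sin θ| := by fun_prop
  have hright : ∫ θ in (0 : ℝ)..(π / 2), |sin θ| = 1 := by
    rw [integral_congr (g := sin) fun θ hθ => ?_]
    · simp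
    rw [uIcc_of_le (by positivity)] at hθ
    exact abs_of_nonneg (sin_nonneg_of_nonneg_of_le_pi hθ.1 (by linarith [hθ.2, pi_pos]))
  have hleft : ∫ θ in -(π / 2)..0, |sin θ| = 1 := by
    have := integral_comp_neg (a := 0) (b := π / 2) fun θ => |sin θ|
    simp only [sin_neg, abs_neg, neg_zero] at this
    rw [← this, hright]
  rw [← integral_add_adjacent_intervals (hc.intervalIntegrable _ 0) (hc.intervalIntegrable 0 _),
    hleft, hright]
  norm_num

lemma thetaRadicand_zero (θ : ℝ) : thetaRadicand 0 θ = sin θ ^ 2 := by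
  norm_num [thetaRadicand]

lemma xmax_zero : xmax 0 = √2 := by
  norm_num [xmax]

lemma xmax_mul_sin_sq_div_sqrt_thetaRadicand_zero (θ : ℝ) :
    (xmax 0 * sin θ) ^ 2 / √(thetaRadicand 0 θ) = 2 * |sin θ| := by
  rw [xmax_zero, thetaRadicand_zero, Real.sqrt_sq_eq_abs, mul_pow, Real.sq_sqrt zero_le_two,
    ← sq_abs, sq, mul_div_assoc, mul_self_div_self]

lemma xmax_mul_sin_sq_div_sqrt_thetaRadicand_le {h : ℝ} (hh : 0 < h) (hh2 : h ≤ 2) (θ : ℝ) :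
    (xmax h * sin θ) ^ 2 / √(thetaRadicand h θ) ≤ 4 := by
  have hs := one_lt_sqrt_one_add_four_mul hh
  have hs3 : √(1 + 4 * h) ≤ 3 := Real.sqrt_le_iff.2 ⟨by norm_num, by linarith⟩
  have hP := thetaRadicand_pos hh θ
  have hsin := sin_sq_le_one θ
  have hnum : (xmax h * sin θ) ^ 2 ≤ 2 * thetaRadicand h θ := by
    rw [mul_pow, xmax_sq, thetaRadicand]; nlinarith
  have hP4 : √(thetaRadicand h θ) ≤ 2 := Real.sqrt_le_iff.2 ⟨by norm_num, by
    rw [thetaRadicand]; nlinarith⟩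
  rw [div_le_iff₀ (Real.sqrt_pos.2 hP)]
  nlinarith [Real.mul_self_sqrt hP.le, Real.sqrt_nonneg (thetaRadicand h θ)]

lemma tendsto_xmax_mul_sin_sq_div_sqrt_thetaRadicand (θ : ℝ) :
    Tendsto (fun h => (xmax h * sin θ) ^ 2 / √(thetaRadicand h θ)) (𝓝[>] 0)
      (𝓝 ((xmax 0 * sin θ) ^ 2 / √(thetaRadicand 0 θ))) := by
  rcases eq_or_ne (sin θ) 0 with hθ | hθ
  · simp [hθ]
  refine ContinuousAt.tendsto ?_ |>.mono_left nhdsWithin_le_nhds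
  refine ContinuousAt.div (by fun_prop) ?_ ?_
  · exact (Real.continuous_sqrt.comp (by unfold thetaRadicand; fun_prop)).continuousAt
  · rw [thetaRadicand_zero, Real.sqrt_sq_eq_abs]; exact abs_ne_zero.2 hθ

lemma tendsto_ellI'_two : Tendsto (ellI' 2) (𝓝[>] 0) (𝓝 4) := by
  have hlim := intervalIntegral.tendsto_integral_filter_of_dominated_convergence
    (μ := volume) (a := -(π / 2)) (b := π / 2) (fun _ => 4)
    (F := fun h θ => (xmax h * sin θ) ^ 2 / √(thetaRadicand h θ))
    (f := fun θ => (xmax 0 * sin θ) ^ 2 / √(thetaRadicand 0 θ)) ?_ ?_ intervalIntegrable_const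
    (ae_of_all _ fun θ _ => tendsto_xmax_mul_sin_sq_div_sqrt_thetaRadicand θ)
  · simp only [xmax_mul_sin_sq_div_sqrt_thetaRadicand_zero, intervalIntegral.integral_const_mul,
      integral_abs_sin_neg_pi_div_two_pi_div_two] at hlim
    refine (hlim.congr' ?_).trans (by norm_num)
    filter_upwards [self_mem_nhdsWithin] with h hh
    exact (ellI'_eq_integral_theta 2 hh).symm
  · filter_upwards [self_mem_nhdsWithin] with h hh
    exact (Continuous.div (by fun_prop) (by fun_prop)
      fun θ => (Real.sqrt_pos.2 (thetaRadicand_pos hh θ)).ne').aestronglyMeasurable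
  · filter_upwards [Ioc_mem_nhdsGT (by norm_num : (0 : ℝ) < 2)] with h hh
    refine ae_of_all _ fun θ _ => ?_
    rw [Real.norm_of_nonneg (by positivity)]
    exact xmax_mul_sin_sq_div_sqrt_thetaRadicand_le hh.1 hh.2 θ

/-- Higher Melnikov function with vanishing constant term: if `(b,c) ≠ (0,0)` and
`(16/15) b + (16/3) c = 0`, then `4b + 4c ≠ 0` and `(b I₂ + c I₄')/h → 4b + 4c`. -/
theorem higher_melnikov_linear_coefficient (b c : ℝ) (hne : (b, c) ≠ (0, 0))
    (hconst : (16/15) * b + (16/3) * c = 0) :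
    4*b + 4*c ≠ 0 ∧
      Tendsto (fun h => (b * ellI 2 h + c * ellI' 4 h) / h)
        (nhdsWithin 0 (Ioi 0)) (nhds (4*b + 4*c)) := by
  obtain rfl : b = -5 * c := by linarith
  have hc : c ≠ 0 := by rintro rfl; simp at hne
  refine ⟨by contrapose! hc; linarith, ?_⟩
  have hlim := tendsto_ellI'_two.const_mul (-4 * c)
  rw [show -4 * c * 4 = 4 * (-5 * c) + 4 * c by ring] at hlim
  refine hlim.congr' ?_
  filter_upwards [self_mem_nhdsWithin] with h hh
  have hkey := ellI'_four_sub_five_mul_ellI_two hh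
  rw [eq_div_iff (ne_of_gt hh)]
  linear_combination -c * hkey
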